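/- Let f, g : [0, T] → (0, ∞) be absolutely continuous functions and let F : (0,∞) → (0,∞) be continuous. Suppose f(0) ≤ g(0), f'(t) ≤ -F(f(t)) for almost every t, and g'(t) = -F(g(t)) for all t. Then f(t) ≤ g(t) for all t ∈ [0, T]. -/

import Mathlib

/-!
Let `Φ` be a primitive of `1 / F` on `(0, ∞)`; it is strictly increasing, and separating variables
shows that `Φ (g t) + t` is constant. Since `Φ` is `C¹`, hence locally Lipschitz, `Φ ∘ f` is again
absolutely continuous, with derivative `f' / F (f) ≤ -1` almost everywhere. Hence
`Φ (f t) + t ≤ Φ (f 0) ≤ Φ (g 0) = Φ (g t) + t`, and monotonicity of `Φ` gives `f t ≤ g t`.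
Comparing through `Φ` needs no Lipschitz condition on `F`, without which solutions of
`g' = -F (g)` need not be unique.
-/

open MeasureTheory

open Set intervalIntegral

section AbsolutelyContinuous

variable {X Y : Type*} [PseudoMetricSpace X] [PseudoMetricSpace Y] {a b : ℝ}

theorem AbsolutelyContinuousOnInterval.congr {f g : ℝ → X}
    (hf : AbsolutelyContinuousOnInterval f a b) (hfg : EqOn f g (uIcc a b)) :
    AbsolutelyContinuousOnInterval g a b := by
  rw [absolutelyContinuousOnInterval_iff] at hf ⊢
  intro ε hε
  obtain ⟨δ, hδ, hfδ⟩ := hf ε hε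
  refine ⟨δ, hδ, fun E hE hlen => ?_⟩
  calc ∑ i ∈ Finset.range E.1, dist (g (E.2 i).1) (g (E.2 i).2)
      = ∑ i ∈ Finset.range E.1, dist (f (E.2 i).1) (f (E.2 i).2) :=
        Finset.sum_congr rfl fun i hi => by rw [hfg (hE.1 i hi).1, hfg (hE.1 i hi).2]
    _ < ε := hfδ E hE hlen

theorem LipschitzOnWith.comp_absolutelyContinuousOnInterval {φ : X → Y} {K : NNReal}
    {s : Set X} (hφ : LipschitzOnWith K φ s) {f : ℝ → X}
    (hf : AbsolutelyContinuousOnInterval f a b) (hfs : MapsTo f (uIcc a b) s) :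
    AbsolutelyContinuousOnInterval (φ ∘ f) a b := by
  rw [absolutelyContinuousOnInterval_iff] at hf ⊢
  intro ε hε
  obtain ⟨δ, hδ, hfδ⟩ := hf (ε / (K + 1)) (by positivity)
  refine ⟨δ, hδ, fun E hE hlen => ?_⟩
  calc ∑ i ∈ Finset.range E.1, dist ((φ ∘ f) (E.2 i).1) ((φ ∘ f) (E.2 i).2)
      ≤ ∑ i ∈ Finset.range E.1, K * dist (f (E.2 i).1) (f (E.2 i).2) :=
        Finset.sum_le_sum fun i hi =>
          hφ.dist_le_mul _ (hfs (hE.1 i hi).1) _ (hfs (hE.1 i hi).2)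
    _ = K * ∑ i ∈ Finset.range E.1, dist (f (E.2 i).1) (f (E.2 i).2) :=
        (Finset.mul_sum _ _ _).symm
    _ ≤ K * (ε / (K + 1)) := by gcongr; exact (hfδ E hE hlen).le
    _ < ε := by
        rw [mul_div_assoc', div_lt_iff₀ (by positivity)]
        nlinarith

end AbsolutelyContinuous

section IntegralRepresentation

variable {u u' : ℝ → ℝ} {a b : ℝ}

theorem absolutelyContinuousOnInterval_of_eqOn_add_integral (hab : a ≤ b)
    (hu' : IntervalIntegrable u' volume a b)
    (hu : ∀ x ∈ Icc a b, u x = u a + ∫ s in a..x, u' s) :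
    AbsolutelyContinuousOnInterval u a b := by
  have hconst : AbsolutelyContinuousOnInterval (fun _ => u a) a b :=
    (LipschitzWith.const (u a)).lipschitzOnWith.absolutelyContinuousOnInterval
  refine (hconst.add (hu'.absolutelyContinuousOnInterval_intervalIntegral left_mem_uIcc)).congr ?_
  intro x hx
  rw [uIcc_of_le hab] at hx
  exact (hu x hx).symm

theorem ae_hasDerivAt_of_eqOn_add_integral (hu' : IntervalIntegrable u' volume a b)
    (hu : ∀ x ∈ Icc a b, u x = u a + ∫ s in a..x, u' s) :
    ∀ᵐ x, x ∈ Ioo a b → HasDerivAt u (u' x) x := by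
  filter_upwards [hu'.ae_hasDerivAt_integral] with x hx hxab
  have hxab' : x ∈ uIcc a b := Icc_subset_uIcc (Ioo_subset_Icc_self hxab)
  refine ((hx hxab' a left_mem_uIcc).const_add (u a)).congr_of_eventuallyEq ?_
  filter_upwards [Ioo_mem_nhds hxab.1 hxab.2] with y hy using hu y (Ioo_subset_Icc_self hy)

end IntegralRepresentation

/-- The `Φ` above; the base point `1` is arbitrary. -/
noncomputable def primitiveOfInv (F : ℝ → ℝ) (y : ℝ) : ℝ := ∫ z in (1 : ℝ)..y, (F z)⁻¹

section PrimitiveOfInv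

variable {F : ℝ → ℝ} {a b : ℝ}

theorem intervalIntegrable_inv_of_pos (hFc : ContinuousOn F (Ioi 0)) (hF : ∀ p > 0, F p ≠ 0)
    {y z : ℝ} (hy : 0 < y) (hz : 0 < z) :
    IntervalIntegrable (fun p => (F p)⁻¹) volume y z := by
  refine ((hFc.inv₀ hF).mono fun p hp => ?_).intervalIntegrable
  rcases mem_uIcc.mp hp with ⟨h, _⟩ | ⟨h, _⟩
  exacts [hy.trans_le h, hz.trans_le h]

theorem hasDerivAt_primitiveOfInv (hFc : ContinuousOn F (Ioi 0)) (hF : ∀ p > 0, F p ≠ 0)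
    {y : ℝ} (hy : 0 < y) : HasDerivAt (primitiveOfInv F) (F y)⁻¹ y :=
  integral_hasDerivAt_right (intervalIntegrable_inv_of_pos hFc hF one_pos hy)
    ((hFc.inv₀ hF).stronglyMeasurableAtFilter isOpen_Ioi y hy)
    ((hFc.inv₀ hF).continuousAt (isOpen_Ioi.mem_nhds hy))

theorem contDiffOn_primitiveOfInv (hFc : ContinuousOn F (Ioi 0)) (hF : ∀ p > 0, F p ≠ 0) :
    ContDiffOn ℝ 1 (primitiveOfInv F) (Ioi 0) := by
  rw [show (1 : WithTop ℕ∞) = 0 + 1 from rfl, contDiffOn_succ_iff_deriv_of_isOpen isOpen_Ioi]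
  refine ⟨fun y hy => (hasDerivAt_primitiveOfInv hFc hF hy).differentiableAt.differentiableWithinAt,
    by simp, contDiffOn_zero.2 ((hFc.inv₀ hF).congr fun y hy => ?_)⟩
  exact (hasDerivAt_primitiveOfInv hFc hF hy).deriv

theorem strictMonoOn_primitiveOfInv (hFc : ContinuousOn F (Ioi 0)) (hF : ∀ p > 0, 0 < F p) :
    StrictMonoOn (primitiveOfInv F) (Ioi 0) := by
  have hF' : ∀ p > 0, F p ≠ 0 := fun p hp => (hF p hp).ne'
  refine strictMonoOn_of_deriv_pos (convex_Ioi 0) (contDiffOn_primitiveOfInv hFc hF').continuousOn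
    fun y hy => ?_
  rw [interior_Ioi] at hy
  rw [(hasDerivAt_primitiveOfInv hFc hF' hy).deriv]
  exact inv_pos.2 (hF y hy)

theorem primitiveOfInv_comp_sub_eq_integral (hFc : ContinuousOn F (Ioi 0))
    (hF : ∀ p > 0, F p ≠ 0) {u u' : ℝ → ℝ} (hab : a ≤ b) (hu' : IntervalIntegrable u' volume a b)
    (hu : ∀ x ∈ Icc a b, u x = u a + ∫ s in a..x, u' s) (hupos : ∀ x ∈ Icc a b, 0 < u x) :
    primitiveOfInv F (u b) - primitiveOfInv F (u a) = ∫ x in a..b, u' x / F (u x) := by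
  have hac := absolutelyContinuousOnInterval_of_eqOn_add_integral hab hu' hu
  have hcont : ContinuousOn u (Icc a b) := by simpa [uIcc_of_le hab] using hac.continuousOn
  obtain ⟨K, hK⟩ := (((contDiffOn_primitiveOfInv hFc hF).locallyLipschitzOn (convex_Ioi 0)).mono
    (image_subset_iff.2 hupos)).exists_lipschitzOnWith_of_compact
    (isCompact_Icc.image_of_continuousOn hcont)
  have hΦu : AbsolutelyContinuousOnInterval (primitiveOfInv F ∘ u) a b :=
    hK.comp_absolutelyContinuousOnInterval hac (by rw [uIcc_of_le hab]; exact mapsTo_image u _)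
  refine hΦu.integral_deriv_eq_sub.symm.trans (integral_congr_ae ?_)
  filter_upwards [ae_hasDerivAt_of_eqOn_add_integral hu' hu,
    measure_eq_zero_iff_ae_notMem.1 (measure_singleton b)] with x hu'x hxb hx
  rw [uIoc_of_le hab] at hx
  have hx' : x ∈ Ioo a b := ⟨hx.1, lt_of_le_of_ne hx.2 hxb⟩
  rw [((hasDerivAt_primitiveOfInv hFc hF (hupos x (Ioo_subset_Icc_self hx'))).comp x
    (hu'x hx')).deriv, div_eq_inv_mul]

theorem primitiveOfInv_comp_le_sub (hFc : ContinuousOn F (Ioi 0)) (hF : ∀ p > 0, 0 < F p)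
    {u u' : ℝ → ℝ} (hab : a ≤ b) (hu' : IntervalIntegrable u' volume a b)
    (hu : ∀ x ∈ Icc a b, u x = u a + ∫ s in a..x, u' s) (hupos : ∀ x ∈ Icc a b, 0 < u x)
    (hineq : ∀ᵐ x ∂volume.restrict (Icc a b), u' x ≤ -F (u x)) :
    primitiveOfInv F (u b) ≤ primitiveOfInv F (u a) - (b - a) := by
  have hF' : ∀ p > 0, F p ≠ 0 := fun p hp => (hF p hp).ne'
  have hcont : ContinuousOn u (uIcc a b) :=
    (absolutelyContinuousOnInterval_of_eqOn_add_integral hab hu' hu).continuousOn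
  have hFu : ContinuousOn (fun x => (F (u x))⁻¹) (uIcc a b) := by
    rw [uIcc_of_le hab] at hcont ⊢
    exact (hFc.comp hcont hupos).inv₀ fun x hx => hF' _ (hupos x hx)
  have hle : ∫ x in a..b, u' x / F (u x) ≤ ∫ _ in a..b, (-1 : ℝ) := by
    refine integral_mono_ae_restrict hab (hu'.mul_continuousOn hFu) intervalIntegrable_const ?_
    filter_upwards [hineq, ae_restrict_mem measurableSet_Icc] with x hx hxab
    rw [div_le_iff₀ (hF _ (hupos x hxab))]
    linarith
  have hchain := primitiveOfInv_comp_sub_eq_integral hFc hF' hab hu' hu hupos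
  simp only [intervalIntegral.integral_const, smul_eq_mul, mul_neg, mul_one] at hle
  linarith

theorem primitiveOfInv_comp_eq_sub (hFc : ContinuousOn F (Ioi 0)) (hF : ∀ p > 0, F p ≠ 0)
    {u : ℝ → ℝ} (hu : ∀ x ∈ uIcc a b, HasDerivAt u (-F (u x)) x)
    (hupos : ∀ x ∈ uIcc a b, 0 < u x) :
    primitiveOfInv F (u b) = primitiveOfInv F (u a) - (b - a) := by
  have hderiv : ∀ x ∈ uIcc a b, HasDerivAt (primitiveOfInv F ∘ u) (-1) x := fun x hx => by
    simpa [hF _ (hupos x hx)] using (hasDerivAt_primitiveOfInv hFc hF (hupos x hx)).comp x (hu x hx)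
  have hftc := integral_eq_sub_of_hasDerivAt hderiv intervalIntegrable_const
  simp only [intervalIntegral.integral_const, smul_eq_mul, mul_neg, mul_one,
    Function.comp_apply] at hftc
  linarith

end PrimitiveOfInv

theorem stmt_5 (T : ℝ) (hT : 0 ≤ T) (f g f' F : ℝ → ℝ)
    (hFc : ContinuousOn F (Set.Ioi 0)) (hFpos : ∀ p > (0:ℝ), 0 < F p)
    (hfpos : ∀ t ∈ Set.Icc 0 T, 0 < f t) (hgpos : ∀ t ∈ Set.Icc 0 T, 0 < g t)
    (hf'int : IntervalIntegrable f' volume 0 T)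
    (hfAC : ∀ t ∈ Set.Icc 0 T, f t = f 0 + ∫ s in (0:ℝ)..t, f' s)
    (hf' : ∀ᵐ t ∂(volume.restrict (Set.Icc 0 T)), f' t ≤ -F (f t))
    (hg : ∀ t ∈ Set.Icc 0 T, HasDerivAt g (-F (g t)) t)
    (h0 : f 0 ≤ g 0) :
    ∀ t ∈ Set.Icc 0 T, f t ≤ g t := by
  intro t ht
  have hsub : Icc 0 t ⊆ Icc 0 T := Icc_subset_Icc_right ht.2
  have hsub' : uIcc 0 t ⊆ Icc 0 T := uIcc_of_le ht.1 ▸ hsub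
  have hΦf : primitiveOfInv F (f t) ≤ primitiveOfInv F (f 0) - t := by
    simpa using primitiveOfInv_comp_le_sub hFc hFpos ht.1
      (hf'int.mono_set (uIcc_subset_uIcc left_mem_uIcc (Icc_subset_uIcc ht)))
      (fun x hx => hfAC x (hsub hx)) (fun x hx => hfpos x (hsub hx))
      (ae_restrict_of_ae_restrict_of_subset hsub hf')
  have hΦg : primitiveOfInv F (g t) = primitiveOfInv F (g 0) - t := by
    simpa using primitiveOfInv_comp_eq_sub hFc (fun p hp => (hFpos p hp).ne')
      (fun x hx => hg x (hsub' hx)) (fun x hx => hgpos x (hsub' hx))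
  have hΦ0 : primitiveOfInv F (f 0) ≤ primitiveOfInv F (g 0) :=
    (strictMonoOn_primitiveOfInv hFc hFpos).monotoneOn (hfpos 0 ⟨le_rfl, hT⟩)
      (hgpos 0 ⟨le_rfl, hT⟩) h0
  exact ((strictMonoOn_primitiveOfInv hFc hFpos).le_iff_le (hfpos t ht) (hgpos t ht)).1
    (by linarith)
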